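/- Let G be a locally finite infinite graph with at most countably many ends such that δ(G) ≥ k and every end ω of G has some defining sequence C₀ ⊋ C₁ ⊋ … of regions with δ⁺_G(C_n) ≥ k for all n (no connectivity requirement on G - C_n). Then G has a finite nonempty subgraph of minimum degree at least k. -/

import Mathlib

open SimpleGraph Set

universe u
variable {V : Type u}

/-- A graph is locally finite if every vertex has finite neighbourhood. -/
def LocFin (G : SimpleGraph V) : Prop := ∀ v, (G.neighborSet v).Finite

/-- The vertex boundary `V⁺(U)`: vertices of `U` with a neighbour outside `U`. -/
def vBdry (G : SimpleGraph V) (U : Set V) : Set V :=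
  {v | v ∈ U ∧ ∃ w, w ∉ U ∧ G.Adj v w}

/-- The neighbourhood `N(U)` of a vertex set `U`: vertices outside `U` adjacent to `U`. -/
def nbhd (G : SimpleGraph V) (U : Set V) : Set V :=
  {w | w ∉ U ∧ ∃ v ∈ U, G.Adj v w}

/-- Degree of `v` in the subgraph of `G` induced on the vertex set `A`. -/
noncomputable def degIn (G : SimpleGraph V) (A : Set V) (v : V) : ℕ :=
  (A ∩ G.neighborSet v).ncard

/-- `C` is (the vertex set of) a component of `G - S`. -/
def IsCompOf (G : SimpleGraph V) (S C : Set V) : Prop :=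
  C.Nonempty ∧ C ∩ S = ∅ ∧ (G.induce C).Connected ∧
    ∀ v ∈ C, ∀ w, w ∉ S → G.Adj v w → w ∈ C

/-- A region of `G`: a (nonempty) connected induced subgraph with finite vertex boundary. -/
def IsRegion (G : SimpleGraph V) (C : Set V) : Prop :=
  (G.induce C).Connected ∧ (vBdry G C).Finite

/-- `δ⁺_G(C) ≥ k`: every boundary vertex of `C` has degree at least `k`
in the graph `G[S, C]` induced on `N(C) ∪ V⁺(C)`. -/
def minOutDegGE (G : SimpleGraph V) (C : Set V) (k : ℕ) : Prop :=
  ∀ v ∈ vBdry G C, k ≤ degIn G (nbhd G C ∪ vBdry G C) v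

/-- `f : ℕ → V` is a ray (one-way infinite path) in `G`. -/
def IsRay (G : SimpleGraph V) (f : ℕ → V) : Prop :=
  Function.Injective f ∧ ∀ n, G.Adj (f n) (f (n + 1))

/-- The ray `f` has a tail inside the vertex set `C`. -/
def HasTailIn (f : ℕ → V) (C : Set V) : Prop := ∃ N, ∀ n, N ≤ n → f n ∈ C

/-- Two rays are equivalent (belong to the same end) iff no finite vertex set
separates them: for every finite `S` they have tails in a common component of `G - S`. -/
def RayEquiv (G : SimpleGraph V) (f g : ℕ → V) : Prop :=
  ∀ S : Set V, S.Finite → ∃ C, IsCompOf G S C ∧ HasTailIn f C ∧ HasTailIn g C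

/-! Every end `e j` of an enumeration of the ends has a defining sequence of regions; choosing one
region `c j` from the `j`-th sequence far enough out that it misses the (finite) boundaries of
`c 0, …, c (j-1)` makes the family laminar, since a connected set missing the boundary of `c i`
lies inside `c i` or outside it. Remove from `G` the interiors of the maximal members of the
family. In what is left, a vertex on the boundary of a maximal `c i` keeps its `≥ k` neighbours
in `N(c i) ∪ V⁺(c i)`, and any other vertex keeps all its neighbours. Every ray has a tail in the
interior of some `c j`, hence of a maximal member, so no ray survives; by Kőnig's lemma the
component of any remaining vertex is then finite, and it has minimum degree at least `k`. -/

section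

open Filter

variable {G : SimpleGraph V}

def vInterior (G : SimpleGraph V) (C : Set V) : Set V := C \ vBdry G C

lemma mem_of_mem_vInterior_of_adj {C : Set V} {u w : V} (hu : u ∈ vInterior G C)
    (huw : G.Adj u w) : w ∈ C := by
  by_contra hw
  exact hu.2 ⟨hu.1, w, hw, huw⟩

lemma subset_of_induce_connected {K P : Set V} (hK : (G.induce K).Connected)
    (hP : ∀ u ∈ K ∩ P, ∀ w ∈ K, G.Adj u w → w ∈ P) {x : V} (hxK : x ∈ K) (hxP : x ∈ P) :
    K ⊆ P := by
  intro y hy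
  obtain ⟨p⟩ := hK.preconnected ⟨x, hxK⟩ ⟨y, hy⟩
  suffices ∀ {a b : K}, (G.induce K).Walk a b → a.1 ∈ P → b.1 ∈ P from this p hxP
  intro a b p
  induction p with
  | nil => exact id
  | cons h _ ih => exact fun ha => ih (hP _ ⟨Subtype.prop _, ha⟩ _ (Subtype.prop _) h)

lemma subset_vInterior_of_disjoint_vBdry {K C : Set V} (hK : (G.induce K).Connected)
    (hKC : Disjoint K (vBdry G C)) {x : V} (hxK : x ∈ K) (hxC : x ∈ C) :
    K ⊆ vInterior G C :=
  subset_of_induce_connected hK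
    (fun _ hu _ hw huw => ⟨mem_of_mem_vInterior_of_adj hu.2 huw, disjoint_left.1 hKC hw⟩)
    hxK ⟨hxC, disjoint_left.1 hKC hxK⟩

lemma subset_or_disjoint_of_disjoint_vBdry {K C : Set V} (hK : (G.induce K).Connected)
    (hKC : Disjoint K (vBdry G C)) : K ⊆ C ∨ Disjoint K C := by
  rcases (K ∩ C).eq_empty_or_nonempty with h | ⟨x, hxK, hxC⟩
  · exact Or.inr (disjoint_iff_inter_eq_empty.2 h)
  · exact Or.inl ((subset_vInterior_of_disjoint_vBdry hK hKC hxK hxC).trans sdiff_subset)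

lemma vBdry_nonempty_of_ssubset {C C' : Set V} (hC : (G.induce C).Connected)
    (hC' : C'.Nonempty) (hsub : C' ⊂ C) : (vBdry G C').Nonempty := by
  rw [nonempty_iff_ne_empty]
  intro hb
  obtain ⟨x, hx⟩ := hC'
  refine hsub.not_subset (subset_of_induce_connected hC (fun u hu _ _ huw => ?_) (hsub.1 hx) hx)
  exact mem_of_mem_vInterior_of_adj ⟨hu.2, hb ▸ notMem_empty u⟩ huw

lemma IsCompOf.subset_of_mem {S C C' : Set V} (h : IsCompOf G S C) (h' : IsCompOf G S C')
    {x : V} (hx : x ∈ C) (hx' : x ∈ C') : C ⊆ C' :=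
  subset_of_induce_connected h.2.2.1
    (fun u hu w hw huw => h'.2.2.2 u hu.2 w
      (fun hwS => (eq_empty_iff_forall_notMem.1 h.2.1 w) ⟨hw, hwS⟩) huw) hx hx'

lemma IsCompOf.eq_of_mem {S C C' : Set V} (h : IsCompOf G S C) (h' : IsCompOf G S C')
    {x : V} (hx : x ∈ C) (hx' : x ∈ C') : C = C' :=
  (h.subset_of_mem h' hx hx').antisymm (h'.subset_of_mem h hx' hx)

lemma eventually_notMem_of_injective {f : ℕ → V} (hf : Function.Injective f) {S : Set V}
    (hS : S.Finite) : ∀ᶠ n in atTop, f n ∉ S := by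
  rw [← Nat.cofinite_eq_atTop]
  exact hf.tendsto_cofinite.eventually hS.eventually_cofinite_notMem

lemma not_hasTailIn_of_finite {f : ℕ → V} (hf : Function.Injective f) {S : Set V}
    (hS : S.Finite) : ¬ HasTailIn f S := fun h =>
  let ⟨_, hin, hout⟩ :=
    ((eventually_atTop.2 h).and (eventually_notMem_of_injective hf hS)).exists
  hout hin

def reachWithin (G : SimpleGraph V) (S : Set V) (v : V) : Set V :=
  {w | ∃ p : G.Walk v w, ∀ x ∈ p.support, x ∈ S}

lemma mem_reachWithin_self {S : Set V} {v : V} (hv : v ∈ S) : v ∈ reachWithin G S v :=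
  ⟨.nil, by simpa using hv⟩

lemma reachWithin_subset {S : Set V} {v : V} : reachWithin G S v ⊆ S :=
  fun _ ⟨p, hp⟩ => hp _ p.end_mem_support

lemma mem_of_mem_reachWithin {S : Set V} {v w : V} (hw : w ∈ reachWithin G S v) : v ∈ S :=
  let ⟨p, hp⟩ := hw
  hp _ p.start_mem_support

lemma mem_reachWithin_of_adj {S : Set V} {v u w : V} (hu : u ∈ reachWithin G S v)
    (huw : G.Adj u w) (hw : w ∈ S) : w ∈ reachWithin G S v := by
  obtain ⟨p, hp⟩ := hu
  refine ⟨p.concat huw, fun x hx => ?_⟩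
  rw [Walk.support_concat, List.mem_append, List.mem_singleton] at hx
  rcases hx with hx | rfl
  exacts [hp x hx, hw]

lemma induce_reachWithin_connected {S : Set V} {v : V} (hv : v ∈ S) :
    (G.induce (reachWithin G S v)).Connected := by
  classical
  refine induce_connected_of_patches v (mem_reachWithin_self hv) fun ⟨p, hp⟩ =>
    ⟨{x | x ∈ p.support}, fun x hx => ?_, p.start_mem_support, p.end_mem_support,
      p.connected_induce_support.preconnected _ _⟩
  exact ⟨p.takeUntil x hx, fun y hy => hp y (p.support_takeUntil_subset_support hx hy)⟩

lemma isCompOf_reachWithin_compl {S : Set V} {v : V} (hv : v ∉ S) :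
    IsCompOf G S (reachWithin G Sᶜ v) :=
  ⟨⟨v, mem_reachWithin_self hv⟩,
    disjoint_iff_inter_eq_empty.1 (disjoint_compl_left.mono_left reachWithin_subset),
    induce_reachWithin_connected hv, fun _ hu _ hw huw => mem_reachWithin_of_adj hu huw hw⟩

lemma rayEquiv_refl {f : ℕ → V} (hf : IsRay G f) : RayEquiv G f f := by
  intro S hS
  obtain ⟨N, hN⟩ := (eventually_notMem_of_injective hf.1 hS).exists_forall_of_atTop
  have htail : HasTailIn f (reachWithin G Sᶜ (f N)) := by
    refine ⟨N, fun n hn => ?_⟩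
    induction n, hn using Nat.le_induction with
    | base => exact mem_reachWithin_self (hN N le_rfl)
    | succ n hn ih => exact mem_reachWithin_of_adj ih (hf.2 n) (hN (n + 1) (by omega))
  exact ⟨_, isCompOf_reachWithin_compl (hN N le_rfl), htail, htail⟩

lemma RayEquiv.symm {f g : ℕ → V} (h : RayEquiv G f g) : RayEquiv G g f := fun S hS =>
  let ⟨C, hC, hf, hg⟩ := h S hS
  ⟨C, hC, hg, hf⟩

lemma RayEquiv.trans {f g h : ℕ → V} (hfg : RayEquiv G f g) (hgh : RayEquiv G g h) :
    RayEquiv G f h := by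
  intro S hS
  obtain ⟨C, hC, hfC, hgC⟩ := hfg S hS
  obtain ⟨C', hC', hgC', hhC'⟩ := hgh S hS
  obtain ⟨n, hn, hn'⟩ := ((eventually_atTop.2 hgC).and (eventually_atTop.2 hgC')).exists
  exact ⟨C, hC, hfC, hC.eq_of_mem hC' hn hn' ▸ hhC'⟩

lemma RayEquiv.hasTailIn_vInterior {f g : ℕ → V} {C : Set V} (h : RayEquiv G f g)
    (hg : range g ⊆ C) (hC : (vBdry G C).Finite) : HasTailIn f (vInterior G C) := by
  obtain ⟨K, hK, ⟨N, hN⟩, ⟨M, hM⟩⟩ := h _ hC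
  have hKC : K ⊆ vInterior G C := subset_vInterior_of_disjoint_vBdry hK.2.2.1
    (disjoint_iff_inter_eq_empty.2 hK.2.1) (hM M le_rfl) (hg (mem_range_self M))
  exact ⟨N, fun n hn => hKC (hN n hn)⟩

lemma exists_seq_forall_rayEquiv
    (hcount : Countable (Quot fun p q : {f : ℕ → V // IsRay G f} => RayEquiv G p.1 q.1))
    (hray : ∃ f, IsRay G f) :
    ∃ F : ℕ → ℕ → V, (∀ j, IsRay G (F j)) ∧ ∀ f, IsRay G f → ∃ j, RayEquiv G (F j) f := by
  obtain ⟨f₀, hf₀⟩ := hray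
  have : Nonempty (Quot fun p q : {f : ℕ → V // IsRay G f} => RayEquiv G p.1 q.1) :=
    ⟨Quot.mk _ ⟨f₀, hf₀⟩⟩
  obtain ⟨e, he⟩ :=
    exists_surjective_nat (Quot fun p q : {f : ℕ → V // IsRay G f} => RayEquiv G p.1 q.1)
  have hequiv : Equivalence fun p q : {f : ℕ → V // IsRay G f} => RayEquiv G p.1 q.1 :=
    ⟨fun p => rayEquiv_refl p.2, RayEquiv.symm, RayEquiv.trans⟩
  refine ⟨fun j => (e j).out.1, fun j => (e j).out.2, fun f hf => ?_⟩
  obtain ⟨j, hj⟩ := he (Quot.mk _ ⟨f, hf⟩)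
  exact ⟨j, hequiv.eqvGen_iff.1 (Quot.eqvGen_exact ((Quot.out_eq _).trans hj))⟩

lemma exists_adj_reachWithin_diff_infinite (hG : LocFin G) {S : Set V} {a : V}
    (h : (reachWithin G S a).Infinite) :
    ∃ a', G.Adj a a' ∧ (reachWithin G (S \ {a}) a').Infinite := by
  classical
  by_contra! hfin
  refine h (((hG a).biUnion fun a' ha' => hfin a' ha').insert a |>.subset fun b ⟨p, hp⟩ => ?_)
  rcases eq_or_ne a b with rfl | hne
  · exact mem_insert _ _
  -- the first step of a path from `a` to `b` leads to a vertex joined to `b` avoiding `a`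
  obtain ⟨a', haa', q, hq⟩ := Walk.exists_eq_cons_of_ne hne p.bypass
  have hpath := hq ▸ p.bypass_isPath
  rw [Walk.cons_isPath_iff] at hpath
  refine mem_insert_of_mem _ (mem_biUnion haa' ⟨q, fun x hx => ⟨?_, ?_⟩⟩)
  · refine hp x (p.support_bypass_subset_support ?_)
    exact hq ▸ Walk.support_cons _ _ ▸ List.mem_cons_of_mem _ hx
  · rintro rfl
    exact hpath.2 hx

lemma exists_ray_of_reachWithin_infinite (hG : LocFin G) {S : Set V} {v : V}
    (h : (reachWithin G S v).Infinite) : ∃ f, IsRay G f ∧ range f ⊆ S := by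
  have step : ∀ x : V × Set V, (reachWithin G x.2 x.1).Infinite →
      ∃ a, G.Adj x.1 a ∧ (reachWithin G (x.2 \ {x.1}) a).Infinite :=
    fun _ hx => exists_adj_reachWithin_diff_infinite hG hx
  have : Nonempty V := ⟨v⟩
  choose! nxt hadj hinf using step
  let x : ℕ → V × Set V := fun n => (fun y => (nxt y, y.2 \ {y.1}))^[n] (v, S)
  have hx_succ : ∀ n, x (n + 1) = (nxt (x n), (x n).2 \ {(x n).1}) :=
    fun n => Function.iterate_succ_apply' _ _ _
  have hxinf : ∀ n, (reachWithin G (x n).2 (x n).1).Infinite := by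
    intro n
    induction n with
    | zero => exact h
    | succ n ih => rw [hx_succ]; exact hinf _ ih
  have hmem : ∀ n, (x n).1 ∈ (x n).2 := fun n => mem_of_mem_reachWithin (hxinf n).nonempty.some_mem
  have hanti : Antitone fun n => (x n).2 :=
    antitone_nat_of_succ_le fun n => by rw [hx_succ]; exact sdiff_subset
  have hleft : ∀ m n, m < n → (x m).1 ∉ (x n).2 := fun m n hmn hm =>
    (by rw [hx_succ]; exact notMem_sdiff_of_mem (mem_singleton _) : (x m).1 ∉ (x (m + 1)).2)
      (hanti hmn hm)
  refine ⟨fun n => (x n).1, ⟨fun m n hmn => ?_, fun n => ?_⟩, ?_⟩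
  · replace hmn : (x m).1 = (x n).1 := hmn
    by_contra hne
    rcases Nat.lt_or_gt_of_ne hne with hlt | hlt
    · exact hleft m n hlt (hmn ▸ hmem n)
    · exact hleft n m hlt (hmn ▸ hmem m)
  · show G.Adj (x n).1 (x (n + 1)).1
    rw [hx_succ]
    exact hadj _ (hxinf n)
  · rintro _ ⟨n, rfl⟩
    exact hanti (Nat.zero_le n) (hmem n)

lemma degIn_mono (hG : LocFin G) {A B : Set V} (hAB : A ⊆ B) (v : V) :
    degIn G A v ≤ degIn G B v :=
  ncard_le_ncard (inter_subset_inter_left _ hAB) ((hG v).subset inter_subset_right)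

lemma exists_finite_subgraph_of_le_degIn (hG : LocFin G) {k : ℕ} {D : Set V} (hD : D.Nonempty)
    (hdeg : ∀ v ∈ D, k ≤ degIn G D v) (hray : ∀ f, IsRay G f → ¬ range f ⊆ D) :
    ∃ H : G.Subgraph, H.verts.Finite ∧ H.verts.Nonempty ∧
      ∀ w ∈ H.verts, k ≤ (H.neighborSet w).ncard := by
  obtain ⟨v, hv⟩ := hD
  have hfin : (reachWithin G D v).Finite := by
    by_contra h
    obtain ⟨f, hf, hfD⟩ := exists_ray_of_reachWithin_infinite hG h
    exact hray f hf hfD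
  refine ⟨(⊤ : G.Subgraph).induce (reachWithin G D v), hfin, ⟨v, mem_reachWithin_self hv⟩,
    fun w hw => (hdeg w (reachWithin_subset hw)).trans (ncard_le_ncard ?_ ?_)⟩
  · exact fun u ⟨huD, hwu⟩ => ⟨hw, mem_reachWithin_of_adj hw hwu huD, hwu⟩
  · exact (hG w).subset fun u hu => hu.2.2

lemma nbhd_union_vBdry_subset_compl {ι : Type*} {s : Set ι} {c : ι → Set V}
    (hs : s.PairwiseDisjoint c) {i : ι} (hi : i ∈ s) :
    nbhd G (c i) ∪ vBdry G (c i) ⊆ (⋃ j ∈ s, vInterior G (c j))ᶜ := by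
  intro w hw
  simp only [mem_compl_iff, mem_iUnion, not_exists]
  intro j hj hwj
  rcases eq_or_ne i j with rfl | hij
  · rcases hw with ⟨hwc, -⟩ | hwb
    exacts [hwc hwj.1, hwj.2 hwb]
  · rcases hw with ⟨-, u, hu, huw⟩ | hwb
    · exact disjoint_left.1 (hs hi hj hij) hu (mem_of_mem_vInterior_of_adj hwj huw.symm)
    · exact disjoint_left.1 (hs hi hj hij) hwb.1 hwj.1

lemma le_degIn_compl_biUnion_vInterior (hG : LocFin G) {k : ℕ}
    (hdeg : ∀ v, k ≤ (G.neighborSet v).ncard) {ι : Type*} {s : Set ι} {c : ι → Set V}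
    (hs : s.PairwiseDisjoint c) (hmin : ∀ i ∈ s, minOutDegGE G (c i) k) {v : V}
    (hv : v ∈ (⋃ j ∈ s, vInterior G (c j))ᶜ) :
    k ≤ degIn G (⋃ j ∈ s, vInterior G (c j))ᶜ v := by
  by_cases hb : ∃ i ∈ s, v ∈ vBdry G (c i)
  · obtain ⟨i, hi, hvi⟩ := hb
    exact (hmin i hi v hvi).trans (degIn_mono hG (nbhd_union_vBdry_subset_compl hs hi) v)
  · push Not at hb
    have hN : G.neighborSet v ⊆ (⋃ j ∈ s, vInterior G (c j))ᶜ := by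
      intro u hu
      simp only [mem_compl_iff, mem_iUnion, not_exists]
      exact fun j hj huj => hv (mem_biUnion hj
        ⟨mem_of_mem_vInterior_of_adj huj hu.symm, hb j hj⟩)
    rw [degIn, inter_eq_self_of_subset_right hN]
    exact hdeg v

def outerIdx {α : Type*} (c : ℕ → Set α) : Set ℕ := {i | ∀ j < i, ¬ c i ⊆ c j}

lemma zero_mem_outerIdx {α : Type*} (c : ℕ → Set α) : 0 ∈ outerIdx c :=
  fun _ h => absurd h (Nat.not_lt_zero _)

lemma exists_mem_outerIdx_subset {α : Type*} (c : ℕ → Set α) (j : ℕ) :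
    ∃ i ∈ outerIdx c, c j ⊆ c i := by
  induction j using Nat.strong_induction_on with
  | _ j ih =>
    by_cases hj : j ∈ outerIdx c
    · exact ⟨j, hj, subset_rfl⟩
    · simp only [outerIdx, mem_ofPred_eq, not_forall, not_not] at hj
      obtain ⟨j', hj', hsub⟩ := hj
      obtain ⟨i, hi, hsub'⟩ := ih j' hj'
      exact ⟨i, hi, hsub.trans hsub'⟩

lemma pairwiseDisjoint_outerIdx {α : Type*} {c : ℕ → Set α}
    (hlam : ∀ i j, i < j → c j ⊆ c i ∨ Disjoint (c j) (c i)) :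
    (outerIdx c).PairwiseDisjoint c := by
  intro i hi j hj hij
  rcases Nat.lt_or_gt_of_ne hij with h | h
  · exact ((hlam i j h).resolve_left (hj i h)).symm
  · exact (hlam j i h).resolve_left (hi j h)

lemma exists_finite_subgraph_of_laminar (hG : LocFin G) {k : ℕ}
    (hdeg : ∀ v, k ≤ (G.neighborSet v).ncard) {c : ℕ → Set V}
    (hfin : ∀ j, (vBdry G (c j)).Finite) (hmin : ∀ j, minOutDegGE G (c j) k)
    (hne : (vBdry G (c 0)).Nonempty) (hlam : ∀ i j, i < j → c j ⊆ c i ∨ Disjoint (c j) (c i))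
    (htail : ∀ f, IsRay G f → ∃ j, HasTailIn f (vInterior G (c j))) :
    ∃ H : G.Subgraph, H.verts.Finite ∧ H.verts.Nonempty ∧
      ∀ w ∈ H.verts, k ≤ (H.neighborSet w).ncard := by
  have hdisj := pairwiseDisjoint_outerIdx hlam
  refine exists_finite_subgraph_of_le_degIn hG (hne.mono
      (subset_union_right.trans (nbhd_union_vBdry_subset_compl hdisj (zero_mem_outerIdx c))))
    (fun v hv => le_degIn_compl_biUnion_vInterior hG hdeg hdisj (fun i _ => hmin i) hv)
    fun f hf hfD => ?_
  obtain ⟨j, N, hN⟩ := htail f hf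
  obtain ⟨i, hi, hji⟩ := exists_mem_outerIdx_subset c j
  -- a tail of `f` lies in `c i` but avoids its interior
  refine not_hasTailIn_of_finite hf.1 (hfin i) ⟨N, fun n hn => by_contra fun hb => ?_⟩
  exact hfD (mem_range_self n) (mem_biUnion hi ⟨hji (hN n hn).1, hb⟩)

lemma exists_seq_disjoint {α : Type*} {X B : ℕ → ℕ → Set α} {P : ℕ → ℕ → Prop}
    (hB : ∀ j n, (B j n).Finite)
    (hX : ∀ j (T : Set α), T.Finite → ∃ n, P j n ∧ Disjoint (X j n) T) :
    ∃ m : ℕ → ℕ, ∀ j, P j (m j) ∧ ∀ i < j, Disjoint (X j (m j)) (B i (m i)) := by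
  choose! pick hpick using hX
  -- `T j` collects the sets `B i (m i)` for `i < j`
  let T : ℕ → Set α := fun j => Nat.rec ∅ (fun i Ti => Ti ∪ B i (pick i Ti)) j
  have hT_succ : ∀ j, T (j + 1) = T j ∪ B j (pick j (T j)) := fun _ => rfl
  have hTfin : ∀ j, (T j).Finite := by
    intro j
    induction j with
    | zero => exact finite_empty
    | succ j ih => rw [hT_succ]; exact ih.union (hB _ _)
  have hTmono : Monotone T :=
    monotone_nat_of_le_succ fun j => by rw [hT_succ]; exact subset_union_left
  refine ⟨fun j => pick j (T j), fun j => ⟨(hpick j _ (hTfin j)).1, fun i hij => ?_⟩⟩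
  exact (hpick j _ (hTfin j)).2.mono_right ((hT_succ i ▸ subset_union_right).trans (hTmono hij))

lemma eventually_disjoint_of_iInter_eq_empty {α : Type*} {C : ℕ → Set α} (hC : Antitone C)
    (hint : ⋂ n, C n = ∅) {T : Set α} (hT : T.Finite) :
    ∀ᶠ n in atTop, Disjoint (C n) T := by
  simp only [disjoint_right]
  refine (hT.eventually_all).2 fun x _ => ?_
  obtain ⟨m, hm⟩ : ∃ m, x ∉ C m := by
    by_contra! h
    simpa [hint] using mem_iInter.2 h
  exact eventually_atTop.2 ⟨m, fun n hn hx => hm (hC hn hx)⟩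

lemma exists_vBdry_nonempty_disjoint {C : ℕ → Set V} (hreg : ∀ n, IsRegion G (C n))
    (hdec : ∀ n, C (n + 1) ⊂ C n) (hint : ⋂ n, C n = ∅) {T : Set V} (hT : T.Finite) :
    ∃ n, (vBdry G (C n)).Nonempty ∧ Disjoint (C n) T := by
  obtain ⟨N, hN⟩ := (eventually_disjoint_of_iInter_eq_empty
    (antitone_nat_of_succ_le fun n => (hdec n).subset) hint hT).exists_forall_of_atTop
  exact ⟨N + 1, vBdry_nonempty_of_ssubset (hreg N).1
    (nonempty_coe_sort.1 (hreg (N + 1)).1.nonempty) (hdec N), hN _ (Nat.le_succ N)⟩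

lemma exists_laminar_regions {k : ℕ}
    (hcount : Countable (Quot fun p q : {f : ℕ → V // IsRay G f} => RayEquiv G p.1 q.1))
    (hray : ∃ f, IsRay G f)
    (hends : ∀ f, IsRay G f → ∃ C : ℕ → Set V,
      (∀ n, IsRegion G (C n)) ∧ (∀ n, C (n + 1) ⊂ C n) ∧ (⋂ n, C n) = ∅ ∧
      (∀ n, ∃ g, IsRay G g ∧ RayEquiv G f g ∧ Set.range g ⊆ C n) ∧
      (∀ n, minOutDegGE G (C n) k)) :
    ∃ c : ℕ → Set V, (∀ j, (vBdry G (c j)).Finite) ∧ (∀ j, minOutDegGE G (c j) k) ∧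
      (∀ j, (vBdry G (c j)).Nonempty) ∧ (∀ i j, i < j → c j ⊆ c i ∨ Disjoint (c j) (c i)) ∧
      ∀ f, IsRay G f → ∃ j, HasTailIn f (vInterior G (c j)) := by
  obtain ⟨F, hF, hFall⟩ := exists_seq_forall_rayEquiv hcount hray
  choose C hreg hdec hint hcov hmin using fun j => hends (F j) (hF j)
  obtain ⟨m, hm⟩ := exists_seq_disjoint (X := C) (B := fun j n => vBdry G (C j n))
    (fun j n => (hreg j n).2)
    fun j _ hT => exists_vBdry_nonempty_disjoint (hreg j) (hdec j) (hint j) hT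
  refine ⟨fun j => C j (m j), fun j => (hreg j _).2, fun j => hmin j _, fun j => (hm j).1,
    fun i j hij => subset_or_disjoint_of_disjoint_vBdry (hreg j _).1 ((hm j).2 i hij),
    fun f hf => ?_⟩
  obtain ⟨j, hj⟩ := hFall f hf
  obtain ⟨g, -, hFg, hgC⟩ := hcov j (m j)
  exact ⟨j, (hj.symm.trans hFg).hasTailIn_vInterior hgC (hreg j _).2⟩

end

/-- Corollary 5(i): like Theorem 2(i) but with no connectivity requirement on `G - Cₙ`:
if `G` is locally finite, infinite, with at most countably many ends, `δ(G) ≥ k`, and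
every end has a defining sequence `C₀ ⊋ C₁ ⊋ …` of regions with `δ⁺_G(Cₙ) ≥ k`, then
`G` has a finite nonempty subgraph of minimum degree at least `k`. -/
theorem stmt16 (G : SimpleGraph V) (hG : LocFin G) (hinf : Infinite V) (k : ℕ)
    (hcount : Countable (Quot fun p q : {f : ℕ → V // IsRay G f} => RayEquiv G p.1 q.1))
    (hdeg : ∀ v, k ≤ (G.neighborSet v).ncard)
    (hends : ∀ f, IsRay G f → ∃ C : ℕ → Set V,
      (∀ n, IsRegion G (C n)) ∧ (∀ n, C (n + 1) ⊂ C n) ∧ (⋂ n, C n) = ∅ ∧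
      (∀ n, ∃ g, IsRay G g ∧ RayEquiv G f g ∧ Set.range g ⊆ C n) ∧
      (∀ n, minOutDegGE G (C n) k)) :
    ∃ H : G.Subgraph, H.verts.Finite ∧ H.verts.Nonempty ∧
      ∀ w ∈ H.verts, k ≤ (H.neighborSet w).ncard := by
  have := hinf
  by_cases hray : ∃ f, IsRay G f
  · obtain ⟨c, hfin, hmin, hne, hlam, htail⟩ := exists_laminar_regions hcount hray hends
    exact exists_finite_subgraph_of_laminar hG hdeg hfin hmin (hne 0) hlam htail
  · refine exists_finite_subgraph_of_le_degIn hG univ_nonempty (fun v _ => ?_)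
      fun f hf _ => hray ⟨f, hf⟩
    simpa [degIn] using hdeg v
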